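/- arXiv:2401.01420 — 9 statements merged into one kernel-verified Lean document; each statement's English description precedes it below -/
import Mathlib

section
/- Let G be a group, n ≥ 1, and suppose y ∈ G satisfies |y^G| ≤ n. Let H ≤ G be a subgroup. If C_H(y) has index at most n in H and h₁, …, h_n ∈ H are elements such that [H, y] is generated by the commutators [h_i, y] and each h_i has at most n^{n−1} conjugates in G, then the subgroup T = ⟨y, h₁, …, h_n⟩ has center of finite index in T, and consequently T′ is finite. -/
open scoped commutatorElement

/-- The conjugacy class of `x` in `G`. -/
def conjClass {G : Type*} [Group G] (x : G) : Set G := {y | ∃ g : G, g * x * g⁻¹ = y}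

lemma centralizer_index_ne_zero {G : Type*} [Group G] {x : G}
    (hfin : (conjClass x).Finite) : (Subgroup.centralizer {x}).index ≠ 0 := by
  haveI := hfin.to_subtype
  have hfinq : Finite (G ⧸ Subgroup.centralizer {x}) := by
    refine Finite.of_injective
      (fun q : G ⧸ Subgroup.centralizer {x} =>
        (⟨q.out * x * q.out⁻¹, q.out, rfl⟩ : conjClass x)) ?_
    intro q1 q2 hq
    simp only [Subtype.mk.injEq] at hq
    rw [← QuotientGroup.out_eq' q1, ← QuotientGroup.out_eq' q2, QuotientGroup.eq]
    rw [Subgroup.mem_centralizer_singleton_iff]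
    have : q1.out * x * q1.out⁻¹ = q2.out * x * q2.out⁻¹ := congrArg Subtype.val hq
    calc q1.out⁻¹ * q2.out * x = q1.out⁻¹ * (q2.out * x * q2.out⁻¹) * q2.out := by group
    _ = q1.out⁻¹ * (q1.out * x * q1.out⁻¹) * q2.out := by rw [this]
    _ = x * (q1.out⁻¹ * q2.out) := by group
  intro h0
  rw [Subgroup.index_eq_zero_iff_infinite] at h0
  exact absurd hfinq h0.not_finite

lemma commutator_eq_of_central {M : Type*} [Group M] (a b z w : M)
    (hz : z ∈ Subgroup.center M) (hw : w ∈ Subgroup.center M) :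
    ⁅a * z, b * w⁆ = ⁅a, b⁆ := by
  have hz' := Subgroup.mem_center_iff.mp hz
  have hw' := Subgroup.mem_center_iff.mp hw
  have h1 : ⁅a * z, b * w⁆ = ⁅a, b * w⁆ := by
    rw [commutatorElement_def, commutatorElement_def, mul_inv_rev]
    calc a * z * (b * w) * (z⁻¹ * a⁻¹) * (b * w)⁻¹
        = a * (z * (b * w) * z⁻¹) * a⁻¹ * (b * w)⁻¹ := by group
      _ = a * (b * w) * a⁻¹ * (b * w)⁻¹ := by rw [← hz' (b * w)]; group
  have h2 : ⁅a, b * w⁆ = ⁅a, b⁆ := by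
    rw [commutatorElement_def, commutatorElement_def, mul_inv_rev]
    calc a * (b * w) * a⁻¹ * (w⁻¹ * b⁻¹)
        = a * b * (w * a⁻¹ * w⁻¹) * b⁻¹ := by group
      _ = a * b * a⁻¹ * b⁻¹ := by rw [← hw' a⁻¹]; group
  rw [h1, h2]

/-- If `y` has at most `n` conjugates, `C_H(y)` has index at most `n` in `H`,
and `[H, y]` is generated by commutators `[hᵢ, y]` where each `hᵢ ∈ H` has at
most `n^(n-1)` conjugates in `G`, then `T = ⟨y, h₁, …, hₙ⟩` has center of
finite index and finite derived subgroup. -/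
theorem center_finite_index_of_generators {G : Type*} [Group G] (n : ℕ) (hn : 1 ≤ n)
    (y : G) (hy : (conjClass y).Finite ∧ (conjClass y).ncard ≤ n)
    (H : Subgroup G)
    (hCy : (Subgroup.centralizer {y}).relIndex H ≤ n ∧
      (Subgroup.centralizer {y}).relIndex H ≠ 0)
    (h : Fin n → G) (hmemH : ∀ i, h i ∈ H)
    (hconj : ∀ i, (conjClass (h i)).Finite ∧ (conjClass (h i)).ncard ≤ n ^ (n - 1))
    (hgen : Subgroup.closure {z : G | ∃ g ∈ H, z = ⁅g, y⁆} =
      Subgroup.closure (Set.range fun i => ⁅h i, y⁆)) :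
    (Subgroup.center (Subgroup.closure ({y} ∪ Set.range h) : Subgroup G)).index ≠ 0 ∧
      ((⁅Subgroup.closure ({y} ∪ Set.range h), Subgroup.closure ({y} ∪ Set.range h)⁆ :
        Subgroup G) : Set G).Finite := by
  set S : Set G := {y} ∪ Set.range h with hS
  set T : Subgroup G := Subgroup.closure S with hT
  set C : Subgroup G := ⨅ o : Option (Fin n),
    Option.elim o (Subgroup.centralizer {y}) (fun i => Subgroup.centralizer {h i}) with hC
  have hCidx : C.index ≠ 0 := by
    apply Subgroup.index_iInf_ne_zero
    rintro (_ | i)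
    · exact centralizer_index_ne_zero hy.1
    · exact centralizer_index_ne_zero (hconj i).1
  haveI : C.FiniteIndex := ⟨hCidx⟩
  have hle : C.subgroupOf T ≤ Subgroup.center T := by
    intro t ht
    rw [Subgroup.mem_center_iff]
    intro s
    have hcomm : ∀ g ∈ T, g * (t : G) = (t : G) * g := by
      intro g hg
      rw [Subgroup.mem_subgroupOf, hC, Subgroup.mem_iInf] at ht
      refine Subgroup.closure_induction ?_ ?_ ?_ ?_ hg
      · rintro x (rfl | ⟨i, rfl⟩)
        · exact (Subgroup.mem_centralizer_singleton_iff.mp (ht none)).symm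
        · exact (Subgroup.mem_centralizer_singleton_iff.mp (ht (some i))).symm
      · simp
      · intro a b _ _ ha hb
        rw [mul_assoc, hb, ← mul_assoc, ha, mul_assoc]
      · intro a _ ha
        exact (Commute.inv_left ha).eq
    exact Subtype.ext (hcomm s s.2)
  have hrel : (C.subgroupOf T).index ≠ 0 := Subgroup.FiniteIndex.index_ne_zero
  have hcenter : (Subgroup.center T).index ≠ 0 := by
    intro h0
    exact hrel (Nat.eq_zero_of_zero_dvd (h0 ▸ Subgroup.index_dvd_of_le hle))
  refine ⟨hcenter, ?_⟩
  haveI : (Subgroup.center T).FiniteIndex := ⟨hcenter⟩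
  haveI hfinq : Finite (T ⧸ Subgroup.center T) := by
    rw [← not_infinite_iff_finite]
    intro hinf
    exact hcenter (Subgroup.index_eq_zero_iff_infinite.mpr hinf)
  haveI : Finite (commutatorSet T) := by
    have hsub : commutatorSet T ⊆
        (fun p : (T ⧸ Subgroup.center T) × (T ⧸ Subgroup.center T) =>
          ⁅p.1.out, p.2.out⁆) '' Set.univ := by
      rintro z ⟨a, b, rfl⟩
      refine ⟨(QuotientGroup.mk a, QuotientGroup.mk b), Set.mem_univ _, ?_⟩
      have ha : (QuotientGroup.mk a : T ⧸ Subgroup.center T).out⁻¹ * a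
          ∈ Subgroup.center T := by
        rw [← QuotientGroup.eq, QuotientGroup.out_eq']
      have hb : (QuotientGroup.mk b : T ⧸ Subgroup.center T).out⁻¹ * b
          ∈ Subgroup.center T := by
        rw [← QuotientGroup.eq, QuotientGroup.out_eq']
      have := commutator_eq_of_central (QuotientGroup.mk a : T ⧸ Subgroup.center T).out
        (QuotientGroup.mk b : T ⧸ Subgroup.center T).out _ _ ha hb
      simpa [mul_inv_cancel_left] using this.symm
    exact Set.Finite.to_subtype ((Set.toFinite _).image _ |>.subset hsub)
  haveI : Finite (_root_.commutator T) := inferInstance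
  have hmap : (⁅T, T⁆ : Subgroup G) = Subgroup.map T.subtype (_root_.commutator T) := by
    rw [_root_.commutator_def, Subgroup.map_commutator, ← MonoidHom.range_eq_map,
      T.range_subtype]
  rw [hmap, Subgroup.coe_map]
  exact (Set.toFinite _).image _
end

section
/- More generally, if w = w(x₁,…,x_k) is a multilinear commutator word on k variables, then every δ_{k−1}-value in a group G is a w-value in G. -/
open scoped commutatorElement

/-- Multilinear commutator words (outer commutator words) on `k` variables:
`x` is one, and if `u`, `v` are multilinear commutator words on disjoint sets of
variables, so is `[u, v]`. -/
inductive MultilinearCommutatorWord : ℕ → Type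
  | var : MultilinearCommutatorWord 1
  | comm : ∀ {a b : ℕ}, MultilinearCommutatorWord a → MultilinearCommutatorWord b →
      MultilinearCommutatorWord (a + b)

/-- The set of values of a multilinear commutator word in a group `G`.  Since the
variables of the two sides of a commutator are disjoint, the set of values of
`[u, v]` is exactly the set of commutators of values of `u` with values of `v`. -/
def MultilinearCommutatorWord.values {k : ℕ} (G : Type*) [Group G] :
    MultilinearCommutatorWord k → Set G
  | .var => Set.univ
  | .comm u v => {z | ∃ a ∈ u.values G, ∃ b ∈ v.values G, z = ⁅a, b⁆}

/-- The set of `δ_i`-values (values of the `i`-th derived word) in a group `G`. -/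
def deltaValues (G : Type*) [Group G] : ℕ → Set G
  | 0 => Set.univ
  | i + 1 => {z | ∃ a ∈ deltaValues G i, ∃ b ∈ deltaValues G i, z = ⁅a, b⁆}

lemma MultilinearCommutatorWord.one_le {k : ℕ} (w : MultilinearCommutatorWord k) : 1 ≤ k := by
  induction w with
  | var => exact le_refl 1
  | comm u v hu hv => omega

lemma deltaValues_succ_subset (G : Type*) [Group G] (n : ℕ) :
    deltaValues G (n + 1) ⊆ deltaValues G n := by
  induction n with
  | zero => exact Set.subset_univ _
  | succ m ih =>
    rintro z ⟨a, ha, b, hb, rfl⟩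
    exact ⟨a, ih ha, b, ih hb, rfl⟩

lemma deltaValues_antitone (G : Type*) [Group G] {m n : ℕ} (h : m ≤ n) :
    deltaValues G n ⊆ deltaValues G m := by
  induction h with
  | refl => exact subset_rfl
  | step _ ih => exact (deltaValues_succ_subset G _).trans ih

/-- If `w` is a multilinear commutator word on `k` variables, then every
`δ_{k-1}`-value in `G` is a `w`-value in `G`. -/
theorem deltaValues_subset_mcw_values (G : Type*) [Group G] {k : ℕ}
    (w : MultilinearCommutatorWord k) :
    deltaValues G (k - 1) ⊆ w.values G := by
  induction w with
  | var => exact Set.subset_univ _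
  | @comm a b u v hu hv =>
    have ha := u.one_le
    have hb := v.one_le
    have h1 : a + b - 1 = (a + b - 2) + 1 := by omega
    rw [h1]
    rintro z ⟨x, hx, y, hy, rfl⟩
    exact ⟨x, hu (deltaValues_antitone G (by omega) hx),
      y, hv (deltaValues_antitone G (by omega) hy), rfl⟩
end

section
/- Let G be a group, g₁, …, g_k ∈ G, M a normal subgroup of G, h ∈ M, and 1 ≤ l ≤ k. Then there exist elements y_i ∈ g_i^M (conjugates of g_i by elements of M) for i = 1, …, k such that [g₁,…,g_{l−1}, g_l h, g_{l+1},…, g_k] = [y₁,…,y_k] · [g₁,…,g_{l−1}, h, g_{l+1},…, g_k]. -/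
open scoped commutatorElement

/-- The left-normed commutator `[g₁, …, g_k]` of a tuple. -/
def leftNormedComm {G : Type*} [Group G] {k : ℕ} (g : Fin k → G) : G :=
  match List.ofFn g with
  | [] => 1
  | x :: xs => xs.foldl (fun a b => ⁅a, b⁆) x

/-- List version of the left-normed commutator. -/
private def lnc {G : Type*} [Group G] : List G → G
  | [] => 1
  | x :: xs => xs.foldl (fun a b => ⁅a, b⁆) x

private lemma leftNormedComm_eq_lnc {G : Type*} [Group G] {k : ℕ} (g : Fin k → G) :
    leftNormedComm g = lnc (List.ofFn g) := by
  unfold leftNormedComm lnc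
  rfl

private lemma lnc_cons {G : Type*} [Group G] (x : G) (xs : List G) :
    lnc (x :: xs) = xs.foldl (fun a b => ⁅a, b⁆) x := rfl

private lemma lnc_append {G : Type*} [Group G] (p r : List G) (hp : p ≠ []) :
    lnc (p ++ r) = r.foldl (fun a b => ⁅a, b⁆) (lnc p) := by
  cases p with
  | nil => exact absurd rfl hp
  | cons x xs => simp [lnc_cons, List.foldl_append]

private lemma foldl_comm_conj {G : Type*} [Group G] (m : G) (L : List G) (x : G) :
    List.foldl (fun a b => ⁅a, b⁆) (m⁻¹ * x * m) (L.map (fun z => m⁻¹ * z * m)) =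
      m⁻¹ * List.foldl (fun a b => ⁅a, b⁆) x L * m := by
  induction L generalizing x with
  | nil => simp
  | cons z L ih =>
      simp only [List.map_cons, List.foldl_cons]
      rw [show ⁅m⁻¹ * x * m, m⁻¹ * z * m⁆ = m⁻¹ * ⁅x, z⁆ * m by
        simp only [commutatorElement_def]; group]
      exact ih _

private lemma lnc_map_conj {G : Type*} [Group G] (m : G) (p : List G) :
    lnc (p.map fun z => m⁻¹ * z * m) = m⁻¹ * lnc p * m := by
  cases p with
  | nil => simp [lnc]
  | cons x xs =>
      rw [List.map_cons, lnc_cons, lnc_cons]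
      exact foldl_comm_conj m xs x

private lemma comm_mul_left {G : Type*} [Group G] (Y B c : G) :
    ⁅Y * B, c⁆ = ⁅Y, B * c * B⁻¹⁆ * ⁅B, c⁆ := by
  simp only [commutatorElement_def]; group

private lemma comm_split_base {G : Type*} [Group G] (w g h : G) :
    ⁅w, g * h⁆ = ⁅(w * h⁻¹ * w⁻¹)⁻¹ * w * (w * h⁻¹ * w⁻¹),
        (h * w * h⁻¹ * w⁻¹)⁻¹ * g * (h * w * h⁻¹ * w⁻¹)⁆ * ⁅w, h⁆ := by
  simp only [commutatorElement_def]; group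

/-- Splitting along the suffix: if `B ∈ M`, then folding commutators of `Y * B`
along `s` splits as a fold of `Y` along `M`-conjugates of `s` times the fold of `B`. -/
private lemma tail_split {G : Type*} [Group G] (M : Subgroup G) [M.Normal] :
    ∀ (s : List G) (Y B : G), B ∈ M →
      ∃ ys : List G, List.Forall₂ (fun y x => ∃ m ∈ M, y = m⁻¹ * x * m) ys s ∧
        List.foldl (fun a b => ⁅a, b⁆) (Y * B) s =
          List.foldl (fun a b => ⁅a, b⁆) Y ys * List.foldl (fun a b => ⁅a, b⁆) B s := by
  intro s
  induction s with
  | nil => exact fun Y B _ => ⟨[], List.Forall₂.nil, rfl⟩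
  | cons c s ih =>
      intro Y B hB
      have hB' : ⁅B, c⁆ ∈ M := by
        have : ⁅B, c⁆ = B * (c * B⁻¹ * c⁻¹) := by
          simp only [commutatorElement_def]; group
        rw [this]
        exact mul_mem hB (‹M.Normal›.conj_mem _ (inv_mem hB) c)
      obtain ⟨ys, hrel, heq⟩ := ih ⁅Y, B * c * B⁻¹⁆ ⁅B, c⁆ hB'
      refine ⟨(B * c * B⁻¹) :: ys, ?_, ?_⟩
      · refine List.Forall₂.cons ⟨B⁻¹, inv_mem hB, by group⟩ hrel
      · simp only [List.foldl_cons]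
        rw [comm_mul_left, heq]

/-- Splitting lemma for `γ_k`: replacing `g_l` by `g_l * h` with `h ∈ M ⊴ G`,
the commutator splits as a product of a commutator of `M`-conjugates of the
`gᵢ` and the commutator with `g_l` replaced by `h`. -/
theorem gamma_split {G : Type*} [Group G] {k : ℕ} (g : Fin k → G)
    (M : Subgroup G) [M.Normal] (h : G) (hh : h ∈ M) (l : Fin k) :
    ∃ y : Fin k → G, (∀ i, ∃ m ∈ M, y i = m⁻¹ * g i * m) ∧
      leftNormedComm (Function.update g l (g l * h)) =
        leftNormedComm y * leftNormedComm (Function.update g l h) := by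
  classical
  set L : List G := List.ofFn g with hL
  have hlenL : L.length = k := by simp [hL]
  have hlval : l.val < L.length := by rw [hlenL]; exact l.isLt
  set p : List G := L.take l.val with hp
  set s : List G := L.drop (l.val + 1) with hs
  have hplen : p.length = l.val := by
    rw [hp, List.length_take]
    omega
  have hLdecomp : L = p ++ g l :: s := by
    have h1 := List.take_append_drop l.val L
    rw [List.drop_eq_getElem_cons hlval] at h1
    have h2 : L[l.val]'hlval = g l := by simp [hL]
    rw [h2] at h1
    exact h1.symm
  -- decomposition of the updated tuple
  have hupdate : ∀ x : G, List.ofFn (Function.update g l x) = p ++ x :: s := by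
    intro x
    have h1 : List.ofFn (Function.update g l x) = L.set l.val x := by
      refine List.ext_getElem (by simp [hL]) ?_
      intro n h₁ h₂
      rw [List.getElem_ofFn, List.getElem_set]
      by_cases hn : (⟨n, by simpa using h₁⟩ : Fin k) = l
      · rw [Function.update_apply, if_pos hn, if_pos]
        exact (congrArg Fin.val hn).symm
      · rw [Function.update_apply, if_neg hn, if_neg (fun hc => hn (Fin.ext hc.symm))]
        simp [hL]
    rw [h1]
    conv_lhs => rw [hLdecomp]
    rw [List.set_append]
    rw [if_neg (by rw [hplen]; omega), hplen, Nat.sub_self, List.set_cons_zero]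
  -- helper to package a list of conjugates into a function on `Fin k`
  have package : ∀ ys : List G,
      List.Forall₂ (fun y x => ∃ m ∈ M, y = m⁻¹ * x * m) ys L →
      lnc (p ++ (g l * h) :: s) = lnc ys * lnc (p ++ h :: s) →
      ∃ y : Fin k → G, (∀ i, ∃ m ∈ M, y i = m⁻¹ * g i * m) ∧
        leftNormedComm (Function.update g l (g l * h)) =
          leftNormedComm y * leftNormedComm (Function.update g l h) := by
    intro ys hrel heq
    have hylen : ys.length = k := by rw [hrel.length_eq, hlenL]
    refine ⟨fun i => ys.get (Fin.cast hylen.symm i), ?_, ?_⟩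
    · intro i
      obtain ⟨-, hget⟩ := List.forall₂_iff_get.mp hrel
      have := hget i.val (by omega) (by omega)
      simpa [hL, List.get_eq_getElem, List.getElem_ofFn] using this
    · have hofn : List.ofFn (fun i => ys.get (Fin.cast hylen.symm i)) = ys := by
        refine List.ext_getElem (by simp [hylen]) ?_
        intro n h₁ h₂
        simp [List.getElem_ofFn]
      rw [leftNormedComm_eq_lnc, leftNormedComm_eq_lnc, leftNormedComm_eq_lnc,
        hupdate, hupdate, hofn]
      exact heq
  by_cases hl0 : l.val = 0
  · -- first position: prefix is empty
    have hpnil : p = [] := by simp [hp, hl0]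
    obtain ⟨ys, hrel, heq⟩ := tail_split M s (g l) h hh
    refine package (g l :: ys) ?_ ?_
    · rw [hLdecomp, hpnil, List.nil_append]
      exact List.Forall₂.cons ⟨1, one_mem M, by simp⟩ hrel
    · rw [hpnil]
      simp only [List.nil_append, lnc_cons]
      exact heq
  · -- general position: nonempty prefix
    have hpne : p ≠ [] := by
      intro hnil
      rw [hnil] at hplen
      exact hl0 (by simpa using hplen.symm)
    set w : G := lnc p with hw
    set m : G := w * h⁻¹ * w⁻¹ with hm
    set a : G := h * w * h⁻¹ * w⁻¹ with ha
    have hmM : m ∈ M := ‹M.Normal›.conj_mem _ (inv_mem hh) w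
    have haM : a ∈ M := by
      have : a = h * (w * h⁻¹ * w⁻¹) := by rw [ha]; group
      rw [this]
      exact mul_mem hh (‹M.Normal›.conj_mem _ (inv_mem hh) w)
    have hBM : ⁅w, h⁆ ∈ M := by
      have : ⁅w, h⁆ = (w * h * w⁻¹) * h⁻¹ := by
        simp only [commutatorElement_def]
      rw [this]
      exact mul_mem (‹M.Normal›.conj_mem _ hh w) (inv_mem hh)
    obtain ⟨ys, hrel, heq⟩ :=
      tail_split M s ⁅m⁻¹ * w * m, a⁻¹ * g l * a⁆ ⁅w, h⁆ hBM
    refine package ((p.map fun z => m⁻¹ * z * m) ++ (a⁻¹ * g l * a) :: ys) ?_ ?_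
    · rw [hLdecomp]
      refine List.rel_append ?_ (List.Forall₂.cons ⟨a, haM, rfl⟩ hrel)
      rw [List.forall₂_map_left_iff]
      exact List.forall₂_same.mpr fun x _ => ⟨m, hmM, rfl⟩
    · have hmapne : (p.map fun z => m⁻¹ * z * m) ≠ [] := by
        simpa using hpne
      rw [lnc_append _ _ hpne, lnc_append _ _ hpne, lnc_append _ _ hmapne]
      rw [show lnc (p.map fun z => m⁻¹ * z * m) = m⁻¹ * w * m from lnc_map_conj m p]
      simp only [List.foldl_cons]
      rw [comm_split_base w (g l) h, ← hm, ← ha]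
      exact heq
end

section
/- Let G be a group and k, m positive integers. Then |γ_k(G)| ≤ m if and only if |γ_k(H)| ≤ m for every finitely generated subgroup H of G. -/
section aux

variable {G : Type*} [Group G]

open scoped commutatorElement

private lemma lcs_map_mono {H₁ H₂ : Subgroup G} (h : H₁ ≤ H₂) (n : ℕ) :
    ((⊤ : Subgroup H₁).lowerCentralSeries n).map H₁.subtype ≤ ((⊤ : Subgroup H₂).lowerCentralSeries n).map H₂.subtype := by
  rintro x ⟨a, ha, rfl⟩
  exact ⟨Subgroup.inclusion h a,
    lowerCentralSeries.map (Subgroup.inclusion h) n ⟨a, ha, rfl⟩, rfl⟩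

private lemma fg_sup {H₁ H₂ : Subgroup G} (h₁ : H₁.FG) (h₂ : H₂.FG) : (H₁ ⊔ H₂).FG := by
  rw [Subgroup.fg_iff] at h₁ h₂ ⊢
  obtain ⟨S₁, hS₁, hf₁⟩ := h₁
  obtain ⟨S₂, hS₂, hf₂⟩ := h₂
  exact ⟨S₁ ∪ S₂, by rw [Subgroup.closure_union, hS₁, hS₂], hf₁.union hf₂⟩

private lemma exists_fg_witness (n : ℕ) :
    ∀ x ∈ (⊤ : Subgroup G).lowerCentralSeries n,
      ∃ H : Subgroup G, H.FG ∧ x ∈ ((⊤ : Subgroup H).lowerCentralSeries n).map H.subtype := by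
  induction n with
  | zero =>
    intro x _
    refine ⟨Subgroup.closure {x}, ?_, ⟨⟨x, Subgroup.subset_closure rfl⟩, trivial, rfl⟩⟩
    exact (Subgroup.fg_iff _).mpr ⟨{x}, rfl, Set.finite_singleton x⟩
  | succ n ih =>
    intro x hx
    rw [mem_lowerCentralSeries_succ_iff] at hx
    induction hx using Subgroup.closure_induction with
    | mem z hz =>
      obtain ⟨p, hp, q, -, rfl⟩ := hz
      obtain ⟨H₁, hfg₁, a, ha, rfl⟩ := ih p hp
      set H : Subgroup G := H₁ ⊔ Subgroup.closure {q} with hH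
      have hle : H₁ ≤ H := le_sup_left
      have hqH : q ∈ H := Subgroup.mem_sup_right (Subgroup.subset_closure rfl)
      have hfg : H.FG :=
        fg_sup hfg₁ ((Subgroup.fg_iff _).mpr ⟨{q}, rfl, Set.finite_singleton q⟩)
      refine ⟨H, hfg, ⁅Subgroup.inclusion hle a, (⟨q, hqH⟩ : H)⁆, ?_, ?_⟩
      · exact Subgroup.commutator_mem_commutator
          (lowerCentralSeries.map (Subgroup.inclusion hle) n ⟨a, ha, rfl⟩)
          (Subgroup.mem_top _)
      · rw [map_commutatorElement]
        simp [commutatorElement_def]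
    | one => exact ⟨⊥, (Subgroup.fg_iff _).mpr ⟨∅, by simp, Set.finite_empty⟩, one_mem _⟩
    | mul z w _ _ hz hw =>
      obtain ⟨H₁, hfg₁, hz⟩ := hz
      obtain ⟨H₂, hfg₂, hw⟩ := hw
      exact ⟨H₁ ⊔ H₂, fg_sup hfg₁ hfg₂,
        mul_mem (lcs_map_mono le_sup_left _ hz) (lcs_map_mono le_sup_right _ hw)⟩
    | inv z _ hz =>
      obtain ⟨H₁, hfg₁, hz⟩ := hz
      exact ⟨H₁, hfg₁, inv_mem hz⟩

private lemma finset_witness (n : ℕ) (s : Finset G)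
    (hs : ↑s ⊆ ((⊤ : Subgroup G).lowerCentralSeries n : Set G)) :
    ∃ H : Subgroup G, H.FG ∧ ∀ x ∈ s, x ∈ ((⊤ : Subgroup H).lowerCentralSeries n).map H.subtype := by
  classical
  revert hs
  induction s using Finset.induction with
  | empty =>
    exact fun _ => ⟨⊥, (Subgroup.fg_iff _).mpr ⟨∅, by simp, Set.finite_empty⟩, by simp⟩
  | @insert a s ha ihs =>
    intro hins
    have hsub : ↑s ⊆ ((⊤ : Subgroup G).lowerCentralSeries n : Set G) := by
      intro x hx; exact hins (by simp [hx])
    obtain ⟨H₁, hfg₁, hH₁⟩ := ihs hsub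
    obtain ⟨H₂, hfg₂, hH₂⟩ := exists_fg_witness n a (hins (by simp))
    refine ⟨H₁ ⊔ H₂, fg_sup hfg₁ hfg₂, ?_⟩
    intro x hx
    rcases Finset.mem_insert.mp hx with rfl | hx
    · exact lcs_map_mono le_sup_right _ hH₂
    · exact lcs_map_mono le_sup_left _ (hH₁ x hx)

end aux

/-- `|γ_k(G)| ≤ m` iff `|γ_k(H)| ≤ m` for every finitely generated subgroup `H ≤ G`.
(Note: with Mathlib's indexing, `γ_k(G) = (⊤ : Subgroup G).lowerCentralSeries (k-1)`.) -/
theorem gamma_finite_iff_fg_subgroups (G : Type*) [Group G] (k m : ℕ)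
    (hk : 1 ≤ k) (hm : 1 ≤ m) :
    (((⊤ : Subgroup G).lowerCentralSeries (k - 1) : Set G).Finite ∧
        ((⊤ : Subgroup G).lowerCentralSeries (k - 1) : Set G).ncard ≤ m) ↔
      ∀ H : Subgroup G, H.FG →
        (((⊤ : Subgroup H).lowerCentralSeries (k - 1) : Set H).Finite ∧
          ((⊤ : Subgroup H).lowerCentralSeries (k - 1) : Set H).ncard ≤ m) := by
  set n := k - 1 with hn
  constructor
  · rintro ⟨hfin, hcard⟩ H _
    have hinj : Function.Injective H.subtype := H.subtype_injective
    set S : Set H := ((⊤ : Subgroup H).lowerCentralSeries n : Set H) with hS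
    have hsub : H.subtype '' S ⊆ ((⊤ : Subgroup G).lowerCentralSeries n : Set G) := by
      rintro x ⟨a, ha, rfl⟩
      exact lowerCentralSeries_map_subtype_le H n ⟨a, ha, rfl⟩
    have himg : (H.subtype '' S).Finite := hfin.subset hsub
    have hSfin : S.Finite := Set.Finite.of_finite_image himg (hinj.injOn)
    refine ⟨hSfin, ?_⟩
    calc S.ncard = (H.subtype '' S).ncard := (Set.ncard_image_of_injective S hinj).symm
      _ ≤ ((⊤ : Subgroup G).lowerCentralSeries n : Set G).ncard := Set.ncard_le_ncard hsub hfin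
      _ ≤ m := hcard
  · intro h
    have key : ∀ s : Finset G, ↑s ⊆ ((⊤ : Subgroup G).lowerCentralSeries n : Set G) → s.card ≤ m := by
      intro s hs
      obtain ⟨H, hfg, hH⟩ := finset_witness n s hs
      obtain ⟨hfin, hcard⟩ := h H hfg
      have hinj : Function.Injective H.subtype := H.subtype_injective
      set S : Set H := ((⊤ : Subgroup H).lowerCentralSeries n : Set H) with hS
      have hsub : ↑s ⊆ H.subtype '' S := by
        intro x hx
        obtain ⟨a, ha, rfl⟩ := hH x hx
        exact ⟨a, ha, rfl⟩
      calc s.card = (↑s : Set G).ncard := (Set.ncard_coe_finset s).symm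
        _ ≤ (H.subtype '' S).ncard := Set.ncard_le_ncard hsub (hfin.image _)
        _ = S.ncard := Set.ncard_image_of_injective S hinj
        _ ≤ m := hcard
    have hfin : ((⊤ : Subgroup G).lowerCentralSeries n : Set G).Finite := by
      by_contra hinf
      obtain ⟨t, hts, htc⟩ := Set.Infinite.exists_subset_card_eq hinf (m + 1)
      have := key t hts
      omega
    refine ⟨hfin, ?_⟩
    have := key hfin.toFinset (by simp)
    rwa [← Set.ncard_eq_toFinset_card _ hfin] at this
end

section
/- Let G be a metabelian group and l ≥ 1. If a, b ∈ G are left l-Engel elements, then every element of ⟨a, b⟩ is a left (2l+1)-Engel element. -/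
set_option maxHeartbeats 1000000
set_option synthInstance.maxHeartbeats 400000

open scoped commutatorElement

/-- An element `g` is a left `l`-Engel element of `G` if `[x, g, …, g] = 1`
(`g` repeated `l` times) for every `x ∈ G`. -/
def IsLeftEngel {G : Type*} [Group G] (l : ℕ) (g : G) : Prop :=
  ∀ x : G, (fun y => ⁅y, g⁆)^[l] x = 1

private lemma nilp_aux {R : Type*} [CommRing R] {l : ℕ} {x y : R}
    (hx : x ^ l = 0) (hy : y ^ l = 0) (α β : R) : (α * x + β * y) ^ (2 * l) = 0 := by
  rw [add_pow]
  refine Finset.sum_eq_zero fun i hi => ?_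
  rcases le_or_gt l i with h | h
  · have hxi : x ^ i = 0 := by
      rw [← Nat.sub_add_cancel h, pow_add, hx, mul_zero]
    simp [mul_pow, hxi]
  · have h2 : l ≤ 2 * l - i := by omega
    have hyi : y ^ (2 * l - i) = 0 := by
      rw [← Nat.sub_add_cancel h2, pow_add, hy, mul_zero]
    simp [mul_pow, hyi]

private lemma inv_aux {R : Type*} [CommRing R] {γ : R} {n : ℕ} (h : γ ^ n = 0) :
    (1 + γ) * (∑ i ∈ Finset.range n, (-γ) ^ i) = 1 := by
  have h2 : (-γ) ^ n = 0 := by rw [neg_pow, h, mul_zero]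
  linear_combination (-geom_sum_mul (-γ) n) - h2

/-- Abstract core: `A` is an abelian group on which `G` acts (via `σ`, by conjugation),
`ι : A → G` an injection whose image is normalized suitably, `a` and `b` act with
`(1 - σ a) ^ l = 0` on `A` after translating the Engel condition. -/
private lemma engel_core {G : Type*} [Group G] {A : Type*} [AddCommGroup A]
    (σ : G → AddMonoid.End A) (ι : A → G)
    (hσmul : ∀ g h : G, σ (g * h) = σ g * σ h) (hσone : σ 1 = 1)
    (hinj : Function.Injective ι) (hι0 : ι 0 = 1)
    (hιc : ∀ (g : G) (y : A), ⁅ι y, g⁆ = ι (y - σ g y))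
    (l : ℕ) (a b : G) (huv : σ a * σ b = σ b * σ a)
    (hsur : ∀ x w : G, ∃ y : A, ι y = ⁅x, w⁆)
    (ha : ∀ x : G, (fun y => ⁅y, a⁆)^[l] x = 1)
    (hb : ∀ x : G, (fun y => ⁅y, b⁆)^[l] x = 1) :
    ∀ w ∈ Subgroup.closure {a, b}, ∀ x : G, (fun y => ⁅y, w⁆)^[2 * l + 1] x = 1 := by
  have iter : ∀ (g : G) (k : ℕ) (y : A),
      (fun z => ⁅z, g⁆)^[k] (ι y) = ι (((1 - σ g) ^ k) y) := by
    intro g k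
    induction k with
    | zero => intro y; simp
    | succ k ih =>
      intro y
      rw [Function.iterate_succ_apply]
      have hsub : (1 - σ g) y = y - σ g y := by
        rfl
      rw [hιc g y, ← hsub, ih ((1 - σ g) y)]
      exact congrArg ι (by rw [pow_succ]; rfl)
  have hzero : ∀ y : A, ι y = 1 → y = 0 := fun y h => hinj (h.trans hι0.symm)
  have hnil : ∀ g : G, (∀ x : G, (fun y => ⁅y, g⁆)^[l] x = 1) → (1 - σ g) ^ l = 0 := by
    intro g hg
    refine AddMonoidHom.ext fun y => ?_
    show ((1 - σ g) ^ l) y = (0 : A)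
    exact hzero _ (by rw [← iter g l y]; exact hg (ι y))
  have hua := hnil a ha
  have hub := hnil b hb
  -- the commutative subring generated by σ a and σ b
  set R₀ : Subring (AddMonoid.End A) := Subring.closure {σ a, σ b} with hR₀
  letI : CommRing R₀ := Subring.closureCommRingOfComm (by
    rintro x (rfl | rfl) y (rfl | rfl)
    · rfl
    · exact huv
    · exact huv.symm
    · rfl)
  have hmema : σ a ∈ R₀ := Subring.subset_closure (Set.mem_insert _ _)
  have hmemb : σ b ∈ R₀ := Subring.subset_closure (Set.mem_insert_of_mem _ rfl)
  set u' : R₀ := ⟨σ a, hmema⟩ with hu'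
  set v' : R₀ := ⟨σ b, hmemb⟩ with hv'
  have hinj' : Function.Injective R₀.subtype := Subtype.coe_injective
  have hu'l : (1 - u') ^ l = 0 := by
    apply hinj'
    rw [map_pow, map_sub, map_one, map_zero]
    exact hua
  have hv'l : (1 - v') ^ l = 0 := by
    apply hinj'
    rw [map_pow, map_sub, map_one, map_zero]
    exact hub
  have main : ∀ w ∈ Subgroup.closure {a, b}, ∃ γ α β : R₀,
      γ = α * (1 - u') + β * (1 - v') ∧ σ w = R₀.subtype (1 + γ) := by
    intro w hw
    induction hw using Subgroup.closure_induction with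
    | mem x hx =>
      rcases hx with rfl | rfl
      · refine ⟨-(1 - u'), -1, 0, by ring, ?_⟩
        have h : (1 : R₀) + -(1 - u') = u' := by ring
        rw [h]; rfl
      · refine ⟨-(1 - v'), 0, -1, by ring, ?_⟩
        have h : (1 : R₀) + -(1 - v') = v' := by ring
        rw [h]; rfl
    | one =>
      refine ⟨0, 0, 0, by ring, ?_⟩
      rw [add_zero, map_one]
      exact hσone
    | mul x y hx hy ihx ihy =>
      obtain ⟨γ₁, α₁, β₁, h1, e1⟩ := ihx
      obtain ⟨γ₂, α₂, β₂, h2, e2⟩ := ihy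
      refine ⟨γ₁ + γ₂ + γ₁ * γ₂, α₁ * (1 + γ₂) + α₂, β₁ * (1 + γ₂) + β₂,
        by rw [h1, h2]; ring, ?_⟩
      rw [hσmul, e1, e2, ← map_mul]
      congr 1
      ring
    | inv x hx ihx =>
      obtain ⟨γ, α, β, h, e⟩ := ihx
      have hγ : γ ^ (2 * l) = 0 := by
        rw [h]; exact nilp_aux hu'l hv'l α β
      set t := ∑ i ∈ Finset.range (2 * l), (-γ) ^ i with ht_def
      have ht : (1 + γ) * t = 1 := inv_aux hγ
      have hxinv : σ x⁻¹ = R₀.subtype t := by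
        have h1 : σ x * σ x⁻¹ = 1 := by
          rw [← hσmul, mul_inv_cancel, hσone]
        calc σ x⁻¹ = 1 * σ x⁻¹ := (one_mul _).symm
          _ = (R₀.subtype t * R₀.subtype (1 + γ)) * σ x⁻¹ := by
              rw [← map_mul, mul_comm t, ht, map_one]
          _ = R₀.subtype t * (σ x * σ x⁻¹) := by rw [mul_assoc, e]
          _ = R₀.subtype t := by rw [h1, mul_one]
      refine ⟨-(γ * t), -(α * t), -(β * t), by rw [h]; ring, ?_⟩
      rw [hxinv]
      congr 1
      linear_combination ht
  -- conclusion
  intro w hw x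
  obtain ⟨γ, α, β, h, e⟩ := main w hw
  have hγ : γ ^ (2 * l) = 0 := by
    rw [h]; exact nilp_aux hu'l hv'l α β
  obtain ⟨y₀, hy₀⟩ := hsur x w
  have hz : (1 - σ w) ^ (2 * l) = 0 := by
    have h0 : (1 : AddMonoid.End A) - R₀.subtype (1 + γ) = R₀.subtype (-γ) := by
      rw [map_neg, map_add, map_one]
      abel
    rw [e, h0, ← map_pow, Even.neg_pow (even_two_mul l), hγ, map_zero]
  rw [Function.iterate_succ_apply]
  show (fun y => ⁅y, w⁆)^[2 * l] ⁅x, w⁆ = 1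
  rw [← hy₀, iter w (2 * l) y₀, hz, AddMonoid.End.zero_apply, hι0]

/-- In a metabelian group, if `a` and `b` are left `l`-Engel elements, then every
element of `⟨a, b⟩` is a left `(2l+1)`-Engel element. -/
theorem engel_in_metabelian {G : Type*} [Group G]
    (hmeta : ∀ a b c d : G, ⁅⁅a, b⁆, ⁅c, d⁆⁆ = 1)
    (l : ℕ) (hl : 1 ≤ l) (a b : G)
    (ha : IsLeftEngel l a) (hb : IsLeftEngel l b) :
    ∀ x ∈ Subgroup.closure {a, b}, IsLeftEngel (2 * l + 1) x := by
  classical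
  -- The commutator subgroup is abelian.
  have hcomm : ∀ c ∈ commutator G, ∀ d ∈ commutator G, c * d = d * c := by
    intro c hc d hd
    rw [commutator_eq_closure] at hc hd
    refine (Subgroup.closure_induction₂ (p := fun x y _ _ => Commute x y)
      (fun x y hx hy => ?_)
      (fun x _ => Commute.one_left x) (fun x _ => Commute.one_right x)
      (fun x y z _ _ _ h1 h2 => h1.mul_left h2)
      (fun y z x _ _ _ h1 h2 => h1.mul_right h2)
      (fun x y _ _ h => h.inv_left)
      (fun x y _ _ h => h.inv_right) hc hd).eq
    obtain ⟨g₁, g₂, rfl⟩ := hx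
    obtain ⟨g₃, g₄, rfl⟩ := hy
    exact commutatorElement_eq_one_iff_commute.mp (hmeta g₁ g₂ g₃ g₄)
  have hconj : ∀ (g : G) {y : G}, y ∈ commutator G → g * y * g⁻¹ ∈ commutator G :=
    fun g y hy => Subgroup.Normal.conj_mem inferInstance y hy g
  -- conjugation endomorphisms of the (additivized) commutator subgroup
  let σ : G → AddMonoid.End (Additive ↥(commutator G)) := fun g =>
    AddMonoidHom.mk'
      (fun y => Additive.ofMul
        (⟨g * ((Additive.toMul y : ↥(commutator G)) : G) * g⁻¹,
          hconj g (Additive.toMul y).2⟩ : ↥(commutator G)))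
      (fun y z => by
        apply Additive.toMul.injective
        apply Subtype.ext
        show g * (↑(Additive.toMul y) * ↑(Additive.toMul z)) * g⁻¹ =
          (g * ↑(Additive.toMul y) * g⁻¹) * (g * ↑(Additive.toMul z) * g⁻¹)
        group)
  let ι : Additive ↥(commutator G) → G := fun y => ((Additive.toMul y : ↥(commutator G)) : G)
  have ext_end : ∀ f g : AddMonoid.End (Additive ↥(commutator G)),
      (∀ y, ι (f y) = ι (g y)) → f = g := by
    intro f g h
    refine AddMonoidHom.ext fun y => ?_
    exact Additive.toMul.injective (Subtype.ext (h y))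
  have hσmul : ∀ g h : G, σ (g * h) = σ g * σ h := by
    intro g h
    refine ext_end _ _ fun y => ?_
    show (g * h) * ι y * (g * h)⁻¹ = g * (h * ι y * h⁻¹) * g⁻¹
    group
  have hσone : σ (1 : G) = 1 := by
    refine ext_end _ _ fun y => ?_
    show (1 : G) * ι y * (1 : G)⁻¹ = ι y
    group
  have hσtriv : ∀ c : G, c ∈ commutator G → σ c = 1 := by
    intro c hc
    refine ext_end _ _ fun y => ?_
    show c * ι y * c⁻¹ = ι y
    rw [hcomm c hc _ (Additive.toMul y).2, mul_assoc, mul_inv_cancel, mul_one]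
  have hinj : Function.Injective ι := by
    intro y z h
    exact Additive.toMul.injective (Subtype.ext h)
  have hι0 : ι 0 = 1 := rfl
  have hιc : ∀ (g : G) (y : Additive ↥(commutator G)), ⁅ι y, g⁆ = ι (y - σ g y) := by
    intro g y
    show ⁅ι y, g⁆ = ((Additive.toMul (y - σ g y) : ↥(commutator G)) : G)
    rw [toMul_sub]
    show ⁅ι y, g⁆ = ((Additive.toMul y / Additive.toMul (σ g y) : ↥(commutator G)) : G)
    rw [Subgroup.coe_div]
    rw [commutatorElement_def, div_eq_mul_inv]
    show ι y * g * (ι y)⁻¹ * g⁻¹ = ι y * (g * ι y * g⁻¹)⁻¹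
    group
  have huv : σ a * σ b = σ b * σ a := by
    have h1 : a * b = b * a * ⁅a⁻¹, b⁻¹⁆ := by
      rw [commutatorElement_def]; group
    have h2 : ⁅a⁻¹, b⁻¹⁆ ∈ commutator G :=
      Subgroup.commutator_mem_commutator (Subgroup.mem_top _) (Subgroup.mem_top _)
    calc σ a * σ b = σ (a * b) := (hσmul a b).symm
      _ = σ (b * a) * σ ⁅a⁻¹, b⁻¹⁆ := by rw [h1, hσmul]
      _ = σ (b * a) := by rw [hσtriv _ h2, mul_one]
      _ = σ b * σ a := hσmul b a
  have hsur : ∀ x w : G, ∃ y : Additive ↥(commutator G), ι y = ⁅x, w⁆ := by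
    intro x w
    have hxw : ⁅x, w⁆ ∈ commutator G :=
      Subgroup.commutator_mem_commutator (Subgroup.mem_top _) (Subgroup.mem_top _)
    exact ⟨Additive.ofMul (⟨⁅x, w⁆, hxw⟩ : ↥(commutator G)), rfl⟩
  letI : CommGroup ↥(commutator G) :=
    { (inferInstance : Group ↥(commutator G)) with
      mul_comm := fun x y => Subtype.ext (hcomm x x.2 y y.2) }
  intro w hw x
  exact engel_core σ ι hσmul hσone hinj hι0 hιc l a b huv hsur ha hb w hw x
end

section
/- Let A be a finite group acting on a finite group G by automorphisms with gcd(|A|, |G|) = 1. Then [G, A, A] = [G, A]. -/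
/-- The subgroup `[G, A]` for an action `φ : A →* MulAut G` by automorphisms:
generated by all `g⁻¹ · (φ a g)`. -/
def actionCommutator {A G : Type*} [Group A] [Group G] (φ : A →* MulAut G)
    (H : Subgroup G) : Subgroup G :=
  Subgroup.closure {x | ∃ g ∈ H, ∃ a : A, x = g⁻¹ * φ a g}

lemma mem_actionCommutator_gen {A G : Type*} [Group A] [Group G] (φ : A →* MulAut G)
    {H : Subgroup G} {g : G} (hg : g ∈ H) (a : A) :
    g⁻¹ * φ a g ∈ actionCommutator φ H :=
  Subgroup.subset_closure ⟨g, hg, a, rfl⟩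

/-- The prime-power order case: if `a ∈ A` has prime power order, then
`[g, a] ∈ [G, A, A]` for all `g`, by a fixed-point argument on the coset `g·[G,A]`. -/
lemma actionCommutator_pp_case {A G : Type*} [Group A] [Group G]
    [Finite A] [Finite G] (φ : A →* MulAut G)
    (hcop : Nat.Coprime (Nat.card A) (Nat.card G))
    {p : ℕ} (hp : p.Prime) {k : ℕ} {a : A} (ha : orderOf a ∣ p ^ k) (g : G) :
    g⁻¹ * φ a g ∈ actionCommutator φ (actionCommutator φ ⊤) := by
  set H := actionCommutator φ ⊤ with hH
  rcases eq_or_ne a 1 with rfl | hane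
  · simp [Subgroup.one_mem]
  -- `p` does not divide `|H|`
  have horder : p ∣ orderOf a := by
    obtain ⟨j, hj, he⟩ := (Nat.dvd_prime_pow hp).mp ha
    rcases Nat.eq_zero_or_pos j with rfl | hjpos
    · simp at he; exact absurd he hane
    · exact he ▸ dvd_pow_self p hjpos.ne'
  have hpA : p ∣ Nat.card A := horder.trans (orderOf_dvd_natCard a)
  have hpH : ¬ p ∣ Nat.card H := by
    intro hdvd
    have h1 : p ∣ Nat.card G := hdvd.trans (Subgroup.card_subgroup_dvd_card H)
    have := Nat.dvd_gcd hpA h1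
    rw [Nat.Coprime.gcd_eq_one hcop] at this
    exact hp.one_lt.ne' (Nat.dvd_one.mp this)
  -- the coset `g • H` as a type
  let X := {x : G // g⁻¹ * x ∈ H}
  have hcard : Nat.card X = Nat.card H := Nat.card_congr
    ⟨fun x => ⟨g⁻¹ * x.1, x.2⟩, fun y => ⟨g * y.1, by simpa using y.2⟩,
     fun x => by simp, fun y => by simp⟩
  -- the p-group `zpowers a` acts on `X`
  letI : SMul (Subgroup.zpowers a) X :=
    ⟨fun z x => ⟨φ z.1 x.1, by
      have : g⁻¹ * (φ z.1 x.1) = (g⁻¹ * x.1) * (x.1⁻¹ * φ z.1 x.1) := by group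
      rw [this]
      exact mul_mem x.2 (mem_actionCommutator_gen φ (Subgroup.mem_top x.1) z.1)⟩⟩
  letI : MulAction (Subgroup.zpowers a) X :=
    { one_smul := fun x => Subtype.ext (by show φ (1 : A) x.1 = x.1; simp)
      mul_smul := fun z w x => Subtype.ext (by
        show φ (z.1 * w.1) x.1 = φ z.1 (φ w.1 x.1)
        rw [map_mul]; rfl) }
  haveI : Fact p.Prime := ⟨hp⟩
  obtain ⟨j, hj, he⟩ := (Nat.dvd_prime_pow hp).mp ha
  have hZ : IsPGroup p (Subgroup.zpowers a) :=
    IsPGroup.of_card (by rw [Nat.card_zpowers, he])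
  obtain ⟨c, hc⟩ := hZ.nonempty_fixed_point_of_prime_not_dvd_card X (by rwa [hcard])
  have hfix : φ a c.1 = c.1 :=
    congrArg Subtype.val (hc (⟨a, Subgroup.mem_zpowers a⟩ : Subgroup.zpowers a))
  have key : g⁻¹ * φ a g = (c.1⁻¹ * g)⁻¹ * φ a (c.1⁻¹ * g) := by
    rw [map_mul, map_inv, hfix]; group
  rw [key]
  exact mem_actionCommutator_gen φ (by simpa using inv_mem c.2) a

/-- Coprime action lemma: if a finite group `A` acts on a finite group `G` with
`gcd(|A|, |G|) = 1`, then `[G, A, A] = [G, A]`. -/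
theorem coprime_action_commutator {A G : Type*} [Group A] [Group G]
    [Finite A] [Finite G] (φ : A →* MulAut G)
    (hcop : Nat.Coprime (Nat.card A) (Nat.card G)) :
    actionCommutator φ (actionCommutator φ ⊤) = actionCommutator φ ⊤ := by
  have main : ∀ n : ℕ, ∀ a : A, orderOf a = n → ∀ g : G,
      g⁻¹ * φ a g ∈ actionCommutator φ (actionCommutator φ ⊤) := by
    intro n
    induction n using Nat.strong_induction_on with
    | _ n ih =>
      intro a han g
      rcases eq_or_ne n 1 with rfl | hn1
      · have ha1 : a = 1 := orderOf_eq_one_iff.mp han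
        simp [ha1, Subgroup.one_mem]
      have hn0 : n ≠ 0 := han ▸ (orderOf_pos a).ne'
      set p := n.minFac with hpdef
      have hp : p.Prime := Nat.minFac_prime hn1
      set k := n.factorization p with hkdef
      set m := n / p ^ k with hmdef
      have hmul : p ^ k * m = n := Nat.ordProj_mul_ordCompl_eq_self n p
      have hm0 : m ≠ 0 := by
        intro h; rw [h, mul_zero] at hmul; exact hn0 hmul.symm
      have hk0 : k ≠ 0 := by
        have hpn : p ∣ n := Nat.minFac_dvd n
        have := (Nat.Prime.factorization_pos_of_dvd hp hn0 hpn)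
        omega
      have hmlt : m < n := by
        have h1 : 1 < p ^ k := Nat.one_lt_pow hk0 hp.one_lt
        exact Nat.div_lt_self (Nat.pos_of_ne_zero hn0) h1
      have hcopkm : Nat.Coprime (p ^ k) m := (Nat.coprime_ordCompl hp hn0).pow_left k
      have hic : IsCoprime ((p ^ k : ℕ) : ℤ) ((m : ℕ) : ℤ) :=
        Nat.isCoprime_iff_coprime.mpr hcopkm
      obtain ⟨x, y, hxy⟩ := hic
      set u : A := (a ^ (p ^ k)) ^ x with hudef
      set v : A := (a ^ m) ^ y with hvdef
      have hauv : a = u * v := by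
        calc a = a ^ (1 : ℤ) := (zpow_one a).symm
          _ = a ^ (x * ((p ^ k : ℕ) : ℤ) + y * ((m : ℕ) : ℤ)) := by rw [hxy]
          _ = a ^ (x * ((p ^ k : ℕ) : ℤ)) * a ^ (y * ((m : ℕ) : ℤ)) := zpow_add a _ _
          _ = u * v := by
            rw [mul_comm x, mul_comm y, zpow_mul, zpow_mul, zpow_natCast, zpow_natCast]
      have hvord : orderOf v ∣ p ^ k := by
        apply orderOf_dvd_of_pow_eq_one
        have h1 : (a ^ m) ^ (p ^ k) = 1 := by
          rw [← pow_mul, mul_comm, hmul, ← han, pow_orderOf_eq_one]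
        calc v ^ (p ^ k) = ((a ^ m) ^ y) ^ ((p ^ k : ℕ) : ℤ) := by rw [zpow_natCast]
          _ = ((a ^ m) ^ ((p ^ k : ℕ) : ℤ)) ^ y := by
            rw [← zpow_mul, mul_comm, zpow_mul]
          _ = 1 := by rw [zpow_natCast, h1, one_zpow]
      have huord : orderOf u ∣ m := by
        apply orderOf_dvd_of_pow_eq_one
        have h1 : (a ^ (p ^ k)) ^ m = 1 := by
          rw [← pow_mul, hmul, ← han, pow_orderOf_eq_one]
        calc u ^ m = ((a ^ (p ^ k)) ^ x) ^ ((m : ℕ) : ℤ) := by rw [zpow_natCast]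
          _ = ((a ^ (p ^ k)) ^ ((m : ℕ) : ℤ)) ^ x := by
            rw [← zpow_mul, mul_comm, zpow_mul]
          _ = 1 := by rw [zpow_natCast, h1, one_zpow]
      have hu : ∀ g' : G, g'⁻¹ * φ u g' ∈ actionCommutator φ (actionCommutator φ ⊤) :=
        fun g' => ih (orderOf u)
          (lt_of_le_of_lt (Nat.le_of_dvd (Nat.pos_of_ne_zero hm0) huord) hmlt) u rfl g'
      have hv : ∀ g' : G, g'⁻¹ * φ v g' ∈ actionCommutator φ (actionCommutator φ ⊤) :=
        fun g' => actionCommutator_pp_case φ hcop hp hvord g'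
      have hsplit : g⁻¹ * φ a g = (g⁻¹ * φ v g) * ((φ v g)⁻¹ * φ u (φ v g)) := by
        rw [hauv, map_mul, MulAut.mul_apply]
        group
      rw [hsplit]
      exact mul_mem (hv g) (hu (φ v g))
  apply le_antisymm
  · apply (Subgroup.closure_le _).mpr
    rintro x ⟨g, hg, a, rfl⟩
    exact mem_actionCommutator_gen φ (Subgroup.mem_top g) a
  · apply (Subgroup.closure_le _).mpr
    rintro x ⟨g, -, a, rfl⟩
    exact main (orderOf a) a rfl g
end

section
/- Let G be a group, n ≥ 1, and set e = n!. Then G^e := ⟨g^e : g ∈ G⟩ centralizes B_n(G) = {x ∈ G : |x^G| ≤ n}; consequently ⟨B_n(G)⟩ ∩ G^e ≤ Z(G^e). -/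
/-- `B_n(G)`: the set of elements of `G` with at most `n` conjugates. -/
def BFC {G : Type*} [Group G] (n : ℕ) : Set G :=
  {x | (conjClass x).Finite ∧ (conjClass x).ncard ≤ n}

lemma pow_factorial_commute {G : Type*} [Group G] (n : ℕ) (hn : 1 ≤ n) (g x : G)
    (hx : x ∈ BFC (G := G) n) : Commute (g ^ n.factorial) x := by
  obtain ⟨hfin, hcard⟩ := hx
  have hmaps : ∀ k ∈ Finset.range (n + 1), g ^ k * x * (g ^ k)⁻¹ ∈ hfin.toFinset := by
    intro k _
    simp only [Set.Finite.mem_toFinset]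
    exact ⟨g ^ k, rfl⟩
  have hlt : hfin.toFinset.card < (Finset.range (n + 1)).card := by
    rw [Finset.card_range]
    have : hfin.toFinset.card = (conjClass x).ncard := (Set.ncard_eq_toFinset_card _ hfin).symm
    omega
  obtain ⟨a, ha, b, hb, hne, heq⟩ :=
    Finset.exists_ne_map_eq_of_card_lt_of_maps_to hlt hmaps
  simp only [Finset.mem_range] at ha hb
  -- WLOG a < b
  have key : ∀ a b : ℕ, a < b → b < n + 1 →
      g ^ a * x * (g ^ a)⁻¹ = g ^ b * x * (g ^ b)⁻¹ → Commute (g ^ n.factorial) x := by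
    intro a b hab hbn h
    set d := b - a with hd
    have hb' : b = a + d := by omega
    have hx' : x = g ^ d * x * (g ^ d)⁻¹ := by
      calc x = (g ^ a)⁻¹ * (g ^ a * x * (g ^ a)⁻¹) * g ^ a := by group
        _ = (g ^ a)⁻¹ * (g ^ (a + d) * x * (g ^ (a + d))⁻¹) * g ^ a := by rw [← hb', h]
        _ = g ^ d * x * (g ^ d)⁻¹ := by rw [pow_add]; group
    have hc : Commute (g ^ d) x := by
      unfold Commute SemiconjBy
      conv_rhs => rw [hx']
      group
    obtain ⟨c, hcc⟩ := Nat.dvd_factorial (by omega : 0 < d) (by omega : d ≤ n)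
    rw [hcc, pow_mul]
    exact hc.pow_left c
  rcases hne.lt_or_gt with h' | h'
  · exact key a b h' hb heq
  · exact key b a h' ha heq.symm

/-- With `e = n!`, the subgroup `G^e = ⟨gᵉ : g ∈ G⟩` centralizes `B_n(G)`;
consequently `⟨B_n(G)⟩ ∩ G^e ≤ Z(G^e)`. -/
theorem powSubgroup_centralizes_BFC {G : Type*} [Group G] (n : ℕ) (hn : 1 ≤ n) :
    (∀ x ∈ Subgroup.closure {y : G | ∃ g : G, y = g ^ n.factorial},
        ∀ b ∈ BFC (G := G) n, Commute x b) ∧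
      ∀ x ∈ Subgroup.closure (BFC (G := G) n),
        x ∈ Subgroup.closure {y : G | ∃ g : G, y = g ^ n.factorial} →
          ∀ z ∈ Subgroup.closure {y : G | ∃ g : G, y = g ^ n.factorial}, Commute x z := by
  have H1 : ∀ x ∈ Subgroup.closure {y : G | ∃ g : G, y = g ^ n.factorial},
      ∀ b ∈ BFC (G := G) n, Commute x b := by
    intro x hx
    refine Subgroup.closure_induction ?_ ?_ ?_ ?_ hx
    · rintro y ⟨g, rfl⟩ b hb
      exact pow_factorial_commute n hn g b hb
    · intro b _; exact Commute.one_left b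
    · intro y z _ _ hy hz b hb
      exact (hy b hb).mul_left (hz b hb)
    · intro y _ hy b hb
      exact (hy b hb).inv_left
  refine ⟨H1, ?_⟩
  intro x hx _ z hz
  refine (Subgroup.closure_induction ?_ ?_ ?_ ?_ hx : Commute z x).symm
  · intro b hb; exact H1 z hz b hb
  · exact Commute.one_right z
  · intro a c _ _ ha hc; exact ha.mul_right hc
  · intro a _ ha; exact ha.inv_right
end

section
/- Let G be a group, N = G′ abelian (G metabelian), and g₁, …, g_{k−1} ∈ G. Suppose that every element of the subgroup N_g = {[a, g₁,…,g_{k−1}] : a ∈ N} lies in B·S where B = {x ∈ G : |x^G| ≤ n} and |S| ≤ s, with 1 ∈ S, and G is finite. Then the commuting probability satisfies Pr(N_g, G) ≥ 1/(s·n²). -/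
open Pointwise
open scoped commutatorElement

/-- The iterated left-normed commutator `[a, g₁, …, g_m]`. -/
def iterComm {G : Type*} [Group G] {m : ℕ} (a : G) (g : Fin m → G) : G :=
  (List.ofFn g).foldl (fun x y => ⁅x, y⁆) a

section Helpers
variable {G : Type*} [Group G]

lemma conjClass_eq_orbit (x : G) :
    conjClass x = MulAction.orbit (ConjAct G) x := by
  ext y
  constructor
  · rintro ⟨g, rfl⟩
    exact ⟨ConjAct.toConjAct g, by simp [ConjAct.smul_def]⟩
  · rintro ⟨m, rfl⟩
    exact ⟨ConjAct.ofConjAct m, by simp [ConjAct.smul_def]⟩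

lemma card_conjClass_mul_card_centralizer [Finite G] (x : G) :
    (conjClass x).ncard * Nat.card (Subgroup.centralizer {x}) = Nat.card G := by
  classical
  have : Fintype G := Fintype.ofFinite G
  rw [Subgroup.nat_card_centralizer_nat_card_stabilizer, conjClass_eq_orbit,
    ← Nat.card_coe_set_eq]
  simp only [Nat.card_eq_fintype_card]
  rw [MulAction.card_orbit_mul_card_stabilizer_eq_card_group (ConjAct G) x]
  rfl

lemma conjClass_mul_subset (x y : G) :
    conjClass (x * y) ⊆ conjClass x * conjClass y := by
  rintro _ ⟨g, rfl⟩
  exact ⟨g * x * g⁻¹, ⟨g, rfl⟩, g * y * g⁻¹, ⟨g, rfl⟩, by group⟩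

lemma conjClass_inv (x : G) :
    conjClass x⁻¹ = (conjClass x)⁻¹ := by
  ext y
  constructor
  · rintro ⟨g, rfl⟩
    exact ⟨g, by group⟩
  · rintro ⟨g, hg⟩
    exact ⟨g, by rw [← inv_inv y, ← hg]; group⟩

lemma commElt_mem_commutator {a : G} (y : G) (_ : a ∈ commutator G) :
    ⁅a, y⁆ ∈ commutator G :=
  Subgroup.commutator_mem_commutator (Subgroup.mem_top a) (Subgroup.mem_top y)

lemma commElt_mul (habel : ∀ a ∈ commutator G, ∀ b ∈ commutator G, Commute a b)
    {a b : G} (ha : a ∈ commutator G) (hb : b ∈ commutator G) (y : G) :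
    ⁅a * b, y⁆ = ⁅a, y⁆ * ⁅b, y⁆ := by
  have h1 : a * ⁅b, y⁆ = ⁅b, y⁆ * a := habel a ha _ (commElt_mem_commutator y hb)
  have h2 : ⁅b, y⁆ * ⁅a, y⁆ = ⁅a, y⁆ * ⁅b, y⁆ :=
    habel _ (commElt_mem_commutator y hb) _ (commElt_mem_commutator y ha)
  have key : ⁅a * b, y⁆ = a * ⁅b, y⁆ * a⁻¹ * ⁅a, y⁆ := by
    simp only [commutatorElement_def]; group
  rw [key, h1]; rw [mul_assoc, mul_assoc, mul_inv_cancel_left, h2]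

lemma foldl_mem (l : List G) : ∀ a ∈ commutator G,
    l.foldl (fun x y => ⁅x, y⁆) a ∈ commutator G := by
  induction l with
  | nil => exact fun a ha => ha
  | cons y t ih => exact fun a ha => ih _ (commElt_mem_commutator y ha)

lemma foldl_mul (habel : ∀ a ∈ commutator G, ∀ b ∈ commutator G, Commute a b)
    (l : List G) : ∀ a ∈ commutator G, ∀ b ∈ commutator G,
    l.foldl (fun x y => ⁅x, y⁆) (a * b)
      = l.foldl (fun x y => ⁅x, y⁆) a * l.foldl (fun x y => ⁅x, y⁆) b := by
  induction l with
  | nil => intros; rfl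
  | cons y t ih =>
    intro a ha b hb
    simp only [List.foldl_cons]
    rw [commElt_mul habel ha hb y]
    exact ih _ (commElt_mem_commutator y ha) _ (commElt_mem_commutator y hb)

end Helpers

/-- Let `G` be a finite metabelian group with `N = G'` abelian, and suppose all
values `[a, g₁, …, g_{k-1}]` (`a ∈ N`) lie in `B·S` where `B = B_n(G)` and
`|S| ≤ s` with `1 ∈ S`.  Then `Pr(N_g, G) ≥ 1/(s·n²)`. -/
theorem commProb_of_covering {G : Type*} [Group G] [Finite G]
    (habel : ∀ a ∈ commutator G, ∀ b ∈ commutator G, Commute a b)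
    {m : ℕ} (g : Fin m → G) (n s : ℕ) (hn : 0 < n) (hs : 0 < s)
    (S : Set G) (hS : S.ncard ≤ s) (h1 : (1 : G) ∈ S)
    (hcover : ∀ a ∈ commutator G,
      iterComm a g ∈ {x : G | (conjClass x).ncard ≤ n} * S) :
    (1 : ℚ) / (s * n ^ 2) ≤
      (Nat.card {p : G × G //
          p.1 ∈ (fun a => iterComm a g) '' (commutator G : Set G) ∧
          p.1 * p.2 = p.2 * p.1} : ℚ) /
        (((fun a => iterComm a g) '' (commutator G : Set G)).ncard * Nat.card G) := by
  classical
  have _inst : Fintype G := Fintype.ofFinite G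
  set φ : G → G := fun a => iterComm a g with hφdef
  set T : Set G := φ '' (commutator G : Set G) with hTdef
  -- division rule for φ on the commutator subgroup
  have hφmem : ∀ a ∈ commutator G, φ a ∈ commutator G := fun a ha =>
    foldl_mem (List.ofFn g) a ha
  have hφdiv : ∀ a ∈ commutator G, ∀ b ∈ commutator G,
      φ (a * b⁻¹) = φ a * (φ b)⁻¹ := by
    intro a ha b hb
    have hab : a * b⁻¹ ∈ commutator G := mul_mem ha (inv_mem hb)
    have h := foldl_mul habel (List.ofFn g) (a * b⁻¹) hab b hb
    rw [inv_mul_cancel_right] at h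
    have : φ a = φ (a * b⁻¹) * φ b := h
    rw [this]; group
  -- finset versions
  set Tf : Finset G := T.toFinset with hTf
  set Sf : Finset G := S.toFinset with hSf
  have hSfcard : Sf.card ≤ s := by
    rw [hSf, ← Set.ncard_eq_toFinset_card']; exact hS
  have hTfpos : 0 < Tf.card := by
    refine Finset.card_pos.mpr ⟨φ 1, Set.mem_toFinset.mpr ⟨1, one_mem _, rfl⟩⟩
  -- selection of coset representatives
  have hsel : ∀ u ∈ Tf, ∃ x, x ∈ Sf ∧ (conjClass (u * x⁻¹)).ncard ≤ n := by
    intro u hu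
    obtain ⟨a, ha, rfl⟩ := Set.mem_toFinset.mp hu
    obtain ⟨b, hb, x, hx, heq⟩ := hcover a ha
    refine ⟨x, Set.mem_toFinset.mpr hx, ?_⟩
    have : iterComm a g * x⁻¹ = b := by rw [← heq]; group
    show (conjClass (iterComm a g * x⁻¹)).ncard ≤ n
    rw [this]; exact hb
  choose! σ hσS hσB using hsel
  -- pigeonhole
  have hfibers : Tf.card = ∑ x ∈ Sf, (Tf.filter fun u => σ u = x).card :=
    Finset.card_eq_sum_card_fiberwise hσS
  obtain ⟨x₀, hx₀S, hmax⟩ :=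
    Finset.exists_max_image Sf (fun x => (Tf.filter fun u => σ u = x).card)
      ⟨1, Set.mem_toFinset.mpr h1⟩
  set F : Finset G := Tf.filter fun u => σ u = x₀ with hF
  have hTle : Tf.card ≤ s * F.card := by
    rw [hfibers]
    calc ∑ x ∈ Sf, (Tf.filter fun u => σ u = x).card
        ≤ Sf.card * F.card := by
          simpa using Finset.sum_le_card_nsmul Sf _ F.card fun x hx => hmax x hx
      _ ≤ s * F.card := Nat.mul_le_mul_right _ hSfcard
  have hFpos : 0 < F.card := by
    rcases Nat.eq_zero_or_pos F.card with h | h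
    · rw [h, mul_zero] at hTle; omega
    · exact h
  obtain ⟨u₀, hu₀F⟩ := Finset.card_pos.mp hFpos
  -- the set of elements with small conjugacy classes in T
  set Df : Finset G := Tf.filter (fun w => (conjClass w).ncard ≤ n ^ 2) with hDf
  have hFD : F.card ≤ Df.card := by
    apply Finset.card_le_card_of_injOn (fun u => u * u₀⁻¹)
    · intro u huF
      have huT := (Finset.mem_filter.mp huF).1
      have huσ := (Finset.mem_filter.mp huF).2
      have hu₀T := (Finset.mem_filter.mp hu₀F).1
      have hu₀σ := (Finset.mem_filter.mp hu₀F).2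
      obtain ⟨a, ha, hau⟩ := Set.mem_toFinset.mp huT
      obtain ⟨a₀, ha₀, hau₀⟩ := Set.mem_toFinset.mp hu₀T
      refine Finset.mem_filter.mpr ⟨Set.mem_toFinset.mpr ?_, ?_⟩
      · exact ⟨a * a₀⁻¹, mul_mem ha (inv_mem ha₀),
          by rw [hφdiv a ha a₀ ha₀, hau, hau₀]⟩
      · have hb₁ : (conjClass (u * x₀⁻¹)).ncard ≤ n := by
          have := hσB u huT; rwa [huσ] at this
        have hb₂ : (conjClass (u₀ * x₀⁻¹)).ncard ≤ n := by
          have := hσB u₀ hu₀T; rwa [hu₀σ] at this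
        have hsplit : u * u₀⁻¹ = (u * x₀⁻¹) * (u₀ * x₀⁻¹)⁻¹ := by group
        calc (conjClass (u * u₀⁻¹)).ncard
            = (conjClass ((u * x₀⁻¹) * (u₀ * x₀⁻¹)⁻¹)).ncard := by rw [hsplit]
          _ ≤ (conjClass (u * x₀⁻¹) * conjClass (u₀ * x₀⁻¹)⁻¹).ncard :=
              Set.ncard_le_ncard (conjClass_mul_subset _ _) (Set.toFinite _)
          _ ≤ (conjClass (u * x₀⁻¹)).ncard * (conjClass (u₀ * x₀⁻¹)⁻¹).ncard := by
              rw [← Nat.card_coe_set_eq, ← Nat.card_coe_set_eq,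
                ← Nat.card_coe_set_eq]
              exact Set.natCard_mul_le
          _ = (conjClass (u * x₀⁻¹)).ncard * (conjClass (u₀ * x₀⁻¹)).ncard := by
              rw [conjClass_inv, Set.ncard_inv]
          _ ≤ n * n := Nat.mul_le_mul hb₁ hb₂
          _ = n ^ 2 := (sq n).symm
    · intro u _ v _ huv
      exact mul_right_cancel huv
  -- counting commuting pairs
  set c : G → ℕ := fun u => (Finset.univ.filter fun v => u * v = v * u).card with hc
  have hNP : Nat.card {p : G × G // p.1 ∈ T ∧ p.1 * p.2 = p.2 * p.1}
      = ∑ u ∈ Tf, c u := by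
    rw [Nat.card_eq_fintype_card, Fintype.card_subtype]
    rw [Finset.card_eq_sum_card_fiberwise
      (f := Prod.fst) (t := Tf)
      (fun p hp => Set.mem_toFinset.mpr (Finset.mem_filter.mp hp).2.1)]
    refine Finset.sum_congr rfl fun u hu => ?_
    refine Finset.card_bij' (fun p _ => p.2) (fun v _ => (u, v)) ?_ ?_ ?_ ?_
    · intro p hp
      simp only [Finset.mem_filter, Finset.mem_univ, true_and] at hp ⊢
      rw [← hp.2]; exact hp.1.2
    · intro v hv
      simp only [Finset.mem_filter, Finset.mem_univ, true_and] at hv ⊢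
      exact ⟨⟨Set.mem_toFinset.mp hu, hv⟩, trivial⟩

    · intro p hp
      simp only [Finset.mem_filter] at hp
      exact Prod.ext hp.2.symm rfl
    · intro v hv
      rfl
  -- orbit-stabilizer for each element
  have hcent : ∀ u : G, (conjClass u).ncard * c u = Nat.card G := by
    intro u
    have hset : ((Subgroup.centralizer {u} : Subgroup G) : Set G)
        = {v : G | u * v = v * u} := by
      ext v
      simp [Subgroup.mem_centralizer_iff, eq_comm]
    have hcu : c u = Nat.card (Subgroup.centralizer {u}) := by
      calc c u = {v : G | u * v = v * u}.toFinset.card := by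
            rw [Set.toFinset_setOf]
        _ = {v : G | u * v = v * u}.ncard := (Set.ncard_eq_toFinset_card' _).symm
        _ = Nat.card {v : G | u * v = v * u} := (Nat.card_coe_set_eq _).symm
        _ = Nat.card (Subgroup.centralizer {u}) := by rw [← hset]; rfl
    rw [hcu]
    exact card_conjClass_mul_card_centralizer u
  have hgood : ∀ u ∈ Df, Nat.card G ≤ c u * n ^ 2 := by
    intro u hu
    have hclass : (conjClass u).ncard ≤ n ^ 2 := (Finset.mem_filter.mp hu).2
    calc Nat.card G = (conjClass u).ncard * c u := (hcent u).symm
      _ ≤ n ^ 2 * c u := Nat.mul_le_mul_right _ hclass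
      _ = c u * n ^ 2 := Nat.mul_comm _ _
  -- main counting inequality
  have h5 : Df.card * Nat.card G ≤ (∑ u ∈ Df, c u) * n ^ 2 := by
    rw [Finset.sum_mul]
    calc Df.card * Nat.card G = ∑ _u ∈ Df, Nat.card G := by
          rw [Finset.sum_const, smul_eq_mul]
      _ ≤ ∑ u ∈ Df, c u * n ^ 2 := Finset.sum_le_sum hgood
  have h6 : ∑ u ∈ Df, c u ≤ ∑ u ∈ Tf, c u :=
    Finset.sum_le_sum_of_subset (Finset.filter_subset _ _)
  have main : Tf.card * Nat.card G
      ≤ Nat.card {p : G × G // p.1 ∈ T ∧ p.1 * p.2 = p.2 * p.1} * (s * n ^ 2) := by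
    calc Tf.card * Nat.card G
        ≤ s * F.card * Nat.card G := Nat.mul_le_mul_right _ hTle
      _ ≤ s * Df.card * Nat.card G := by
          exact Nat.mul_le_mul_right _ (Nat.mul_le_mul_left _ hFD)
      _ = s * (Df.card * Nat.card G) := by ring
      _ ≤ s * ((∑ u ∈ Df, c u) * n ^ 2) := Nat.mul_le_mul_left _ h5
      _ ≤ s * ((∑ u ∈ Tf, c u) * n ^ 2) :=
          Nat.mul_le_mul_left _ (Nat.mul_le_mul_right _ h6)
      _ = (∑ u ∈ Tf, c u) * (s * n ^ 2) := by ring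
      _ = _ := by rw [hNP]
  -- conclude with rational arithmetic
  have hTn : T.ncard = Tf.card := Set.ncard_eq_toFinset_card' T
  have hGpos : 0 < Nat.card G := Nat.card_pos
  have hd1 : (0 : ℚ) < (s : ℚ) * (n : ℚ) ^ 2 := by positivity
  have hd2 : (0 : ℚ) < (T.ncard : ℚ) * (Nat.card G : ℚ) := by
    have : 0 < T.ncard := by rw [hTn]; exact hTfpos
    positivity
  rw [div_le_div_iff₀ hd1 hd2, one_mul]
  have := main
  rw [← hTn] at this
  exact_mod_cast this
end

section
/- Let G be a group and N ≤ G′ a normal subgroup with N abelian and G/N nilpotent of class at most c. If P is a subgroup of G with P nilpotent of class at most c and N·P = G, then P ∩ N ≤ Z_c(G), the c-th term of the upper central series of G. (Special case used: if [P ∩ N, g₁, …, g_c] = 1 for all g_i ∈ G then P ∩ N ≤ Z_c(G).) -/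
open Pointwise
open scoped commutatorElement

/-- If `N ⊴ G` is abelian with `N ≤ G'`, `G/N` is nilpotent of class at most `c`,
`P ≤ G` is nilpotent of class at most `c`, and `G = NP`, then `P ∩ N ≤ Z_c(G)`. -/
theorem inter_le_upperCentral {G : Type*} [Group G] (N P : Subgroup G) [N.Normal]
    (c : ℕ) (hNle : N ≤ commutator G)
    (habel : ∀ a ∈ N, ∀ b ∈ N, Commute a b)
    (hquot : Subgroup.lowerCentralSeries (⊤ : Subgroup (G ⧸ N)) c = ⊥)
    (hP : Subgroup.lowerCentralSeries (⊤ : Subgroup P) c = ⊥)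
    (hprod : (N : Set G) * (P : Set G) = Set.univ) :
    P ⊓ N ≤ Subgroup.upperCentralSeries G c := by
  have key : ∀ (m : ℕ) (x : G), x ∈ (Subgroup.lowerCentralSeries (⊤ : Subgroup P) m).map P.subtype → x ∈ N →
      ∀ g : G, ⁅x, g⁆ ∈ (Subgroup.lowerCentralSeries (⊤ : Subgroup P) (m + 1)).map P.subtype ∧ ⁅x, g⁆ ∈ N := by
    intro m x hx hxN g
    have hg : g ∈ (N : Set G) * (P : Set G) := by rw [hprod]; trivial
    obtain ⟨n, hn, p, hp, rfl⟩ := hg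
    have hxp_N : ⁅x, p⁆ ∈ N := by
      have h1 : p * x⁻¹ * p⁻¹ ∈ N :=
        Subgroup.Normal.conj_mem ‹N.Normal› _ (inv_mem hxN) p
      have := mul_mem hxN h1
      simpa [commutatorElement_def, mul_assoc] using this
    have h1 : x * n = n * x := habel x hxN n hn
    have h2 : n * ⁅x, p⁆ = ⁅x, p⁆ * n := habel n hn _ hxp_N
    have hcomm : ⁅x, n * p⁆ = ⁅x, p⁆ := by
      have : ⁅x, n * p⁆ = n * ⁅x, p⁆ * n⁻¹ := by
        simp only [commutatorElement_def, mul_inv_rev]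
        rw [show x * (n * p) = n * x * p by rw [← mul_assoc, h1]]
        group
      rw [this, h2, mul_inv_cancel_right]
    obtain ⟨x', hx', rfl⟩ := hx
    have hmem : ⁅x', (⟨p, hp⟩ : P)⁆ ∈ Subgroup.lowerCentralSeries (⊤ : Subgroup P) (m + 1) := by
      rw [Subgroup.lowerCentralSeries_succ]
      exact Subgroup.commutator_mem_commutator hx' (Subgroup.mem_top _)
    constructor
    · rw [hcomm]
      exact ⟨_, hmem, by simp [map_commutatorElement]⟩
    · rw [hcomm]; exact hxp_N
  have main : ∀ j, j ≤ c → ∀ x : G, x ∈ (Subgroup.lowerCentralSeries (⊤ : Subgroup P) (c - j)).map P.subtype →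
      x ∈ N → x ∈ Subgroup.upperCentralSeries G j := by
    intro j
    induction j with
    | zero =>
      intro _ x hx hxN
      rw [Nat.sub_zero, hP, Subgroup.map_bot, Subgroup.mem_bot] at hx
      simp [hx]
    | succ j ih =>
      intro hj x hx hxN
      rw [Subgroup.mem_upperCentralSeries_succ_iff]
      intro g
      have hsub : (c - (j + 1)) + 1 = c - j := by omega
      have hk := key (c - (j + 1)) x hx hxN g
      rw [hsub] at hk
      have : x * g * x⁻¹ * g⁻¹ = ⁅x, g⁆ := by
        simp [commutatorElement_def, mul_assoc]
      exact ih (by omega) _ hk.1 hk.2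
  intro x hx
  have := main c le_rfl x ⟨⟨x, hx.1⟩, by simp [Nat.sub_self], rfl⟩ hx.2
  simpa using this
end
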